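/- If all error variances in a Gaussian linear SEM are equal (Ω* = ω* I), then for every permutation σ, tr(Ω*_σ) ≥ tr(Ω*) = p ω*, with equality if and only if σ is consistent with the true DAG; consequently the true DAG is the unique minimum-trace DAG. -/

import Mathlib

open Matrix BigOperators

/-- Conditional variance of coordinate `j` of a centered Gaussian vector with covariance `S`,
given the coordinates in the index set `A`, i.e. the Schur complement
`S j j - S_{jA} (S_{AA})⁻¹ S_{Aj}`. -/
noncomputable def condVar {p : ℕ} (S : Matrix (Fin p) (Fin p) ℝ) (j : Fin p)
    (A : Finset (Fin p)) : ℝ :=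
  S j j - ∑ s : A, ∑ t : A,
    S j s.1 * (Matrix.of fun a b : A => S a.1 b.1)⁻¹ s t * S t.1 j

/-- The set of predecessors of node `j` under the ordering `σ`. -/
def PRED {p : ℕ} (σ : Equiv.Perm (Fin p)) (j : Fin p) : Finset (Fin p) :=
  Finset.univ.filter fun i => σ.symm i < σ.symm j

/-- `σ` is consistent with the DAG encoded by the weighted adjacency matrix `B`:
every edge `i → j` (i.e. `B i j ≠ 0`) goes forward in the ordering `σ`. -/
def Consistent {p : ℕ} (B : Matrix (Fin p) (Fin p) ℝ) (σ : Equiv.Perm (Fin p)) : Prop :=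
  ∀ i j, B i j ≠ 0 → σ.symm i < σ.symm j

/-- The covariance matrix `Σ = (I - Bᵀ)⁻¹ Ω (I - B)⁻¹` of the Gaussian linear SEM
`X = Bᵀ X + ε`, `ε ~ N(0, Ω)` with `Ω = diag ω`. -/
noncomputable def modelCov {p : ℕ} (B : Matrix (Fin p) (Fin p) ℝ) (ω : Fin p → ℝ) :
    Matrix (Fin p) (Fin p) ℝ :=
  (1 - B.transpose)⁻¹ * Matrix.diagonal ω * (1 - B)⁻¹

/-!
Write `N = (1 - B)⁻¹`, so that `Σ = ω Nᵀ N` and `det Σ = ωᵖ`. For any ordering `σ` the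
conditional variances `condVar Σ j (PRED σ j)` are the pivots of a triangular factorisation
of `Σ` along `σ`, so their product is `det Σ = ωᵖ`; by AM-GM their sum is at least `p ω`,
with equality iff each of them equals `ω`.

A conditional variance is the least variance of a combination `X_j - β ⬝ᵥ X_A`, that is
`ω ‖N v‖²` for a coefficient vector `v` with `v j = 1` supported on `{j} ∪ A`. If `A` is
ancestral and `j ∉ A`, then `(N v) j = 1`, so this variance is at least `ω`, with equality
only for `v = (1 - B) eⱼ`; that `v` is admissible iff `A` contains the parents of `j`.
Induction along `σ` turns "all conditional variances equal `ω`" into consistency of `σ`.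
-/

namespace GaussianSEM

section AMGM

variable {ι : Type*} [Fintype ι]

theorem card_mul_le_sum_and_sum_eq_iff {c : ℝ} (hc : 0 < c) {x : ι → ℝ} (hx : ∀ j, 0 < x j)
    (hprod : ∏ j, x j = c ^ Fintype.card ι) :
    Fintype.card ι * c ≤ ∑ j, x j ∧ (∑ j, x j = Fintype.card ι * c ↔ ∀ j, x j = c) := by
  set gap : ι → ℝ := fun j => x j / c - 1 - Real.log (x j / c)
  have hgap_nonneg : ∀ j, 0 ≤ gap j := fun j =>
    sub_nonneg.2 (Real.log_le_sub_one_of_pos (div_pos (hx j) hc))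
  have hgap_eq_zero : ∀ j, gap j = 0 ↔ x j = c := fun j => by
    refine ⟨fun h => ?_, fun h => by simp [gap, h, hc.ne']⟩
    by_contra hne
    have := Real.log_lt_sub_one_of_pos (div_pos (hx j) hc)
      (by rwa [ne_eq, div_eq_one_iff_eq hc.ne'])
    simp only [gap] at h
    linarith
  have hlog : ∑ j, Real.log (x j / c) = 0 := by
    rw [← Real.log_prod fun j _ => (div_pos (hx j) hc).ne', Finset.prod_div_distrib, hprod,
      Finset.prod_const, Finset.card_univ, div_self (by positivity), Real.log_one]
  have hsum : ∑ j, x j = c * (Fintype.card ι + ∑ j, gap j) := by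
    simp only [gap, Finset.sum_sub_distrib, hlog, Finset.sum_const, Finset.card_univ,
      ← Finset.sum_div, nsmul_eq_mul, mul_one]
    field_simp
    ring
  refine ⟨?_, ?_⟩
  · rw [hsum]
    nlinarith [Finset.sum_nonneg fun j (_ : j ∈ Finset.univ) => hgap_nonneg j]
  · rw [hsum, mul_comm, mul_left_inj' hc.ne', add_eq_left,
      Finset.sum_eq_zero_iff_of_nonneg fun j _ => hgap_nonneg j]
    simp [hgap_eq_zero]

end AMGM

section Vector

variable {ι : Type*} [Fintype ι]

theorem dotProduct_mulVec_comm {S : Matrix ι ι ℝ} (hS : S.IsSymm) (u v : ι → ℝ) :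
    u ⬝ᵥ S *ᵥ v = v ⬝ᵥ S *ᵥ u := by
  rw [dotProduct_mulVec, ← hS, vecMul_transpose, dotProduct_comm, hS]

variable [DecidableEq ι] {x : ι → ℝ} {j : ι}

theorem dotProduct_self_eq_one_add (hj : x j = 1) :
    x ⬝ᵥ x = 1 + ∑ i ∈ Finset.univ.erase j, x i * x i := by
  rw [dotProduct, ← Finset.add_sum_erase _ _ (Finset.mem_univ j), hj, one_mul]

theorem one_le_dotProduct_self (hj : x j = 1) : 1 ≤ x ⬝ᵥ x := by
  rw [dotProduct_self_eq_one_add hj, le_add_iff_nonneg_right]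
  exact Finset.sum_nonneg fun i _ => mul_self_nonneg (x i)

theorem dotProduct_self_eq_one_iff (hj : x j = 1) : x ⬝ᵥ x = 1 ↔ x = Pi.single j 1 := by
  refine ⟨fun h => funext fun i => ?_, fun h => by simp [h]⟩
  rw [dotProduct_self_eq_one_add hj, add_eq_left,
    Finset.sum_eq_zero_iff_of_nonneg fun i _ => mul_self_nonneg (x i)] at h
  by_cases hij : i = j
  · rw [hij, hj, Pi.single_eq_same]
  · rw [Pi.single_eq_of_ne hij]
    exact mul_self_eq_zero.mp (h i (Finset.mem_erase.mpr ⟨hij, Finset.mem_univ i⟩))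

end Vector

section Triangular

variable {ι R : Type*} [LinearOrder ι] [CommRing R] {B : Matrix ι ι R}

def IsAncestral (B : Matrix ι ι R) (A : Set ι) : Prop :=
  ∀ i ∈ A, ∀ k, B k i ≠ 0 → k ∈ A

theorem isAncestral_Iio (hB : ∀ i j, B i j ≠ 0 → i < j) (j : ι) :
    IsAncestral B (Set.Iio j) :=
  fun _ hi k hk => (hB k _ hk).trans hi

variable [Fintype ι] [DecidableEq ι]

theorem det_one_sub_eq_one (hB : ∀ i j, B i j ≠ 0 → i < j) : (1 - B).det = 1 := by
  have htri : (1 - B).IsUpperTriangular := fun i j hji => by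
    have hBij : B i j = 0 := by_contra fun h => (hB i j h).not_gt hji
    simp [one_apply_ne (show i ≠ j from hji.ne'), hBij]
  rw [det_of_isUpperTriangular htri]
  refine Finset.prod_eq_one fun i _ => ?_
  have hBii : B i i = 0 := by_contra fun h => (hB i i h).false
  simp [hBii]

theorem isUnit_det_one_sub (hB : ∀ i j, B i j ≠ 0 → i < j) : IsUnit (1 - B).det := by
  rw [det_one_sub_eq_one hB]
  exact isUnit_one

theorem inv_one_sub_eq_one_add_mul (hB : ∀ i j, B i j ≠ 0 → i < j) :
    (1 - B)⁻¹ = 1 + (1 - B)⁻¹ * B := by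
  have h := nonsing_inv_mul (1 - B) (isUnit_det_one_sub hB)
  rw [mul_sub, mul_one] at h
  exact sub_eq_iff_eq_add.mp h

/-- `(1 - B)⁻¹ k i ≠ 0` only if `k` is an ancestor of `i` (or `i` itself), and ancestral sets
contain all ancestors of their members. -/
theorem inv_one_sub_apply_eq_zero_of_isAncestral
    (hB : ∀ i j, B i j ≠ 0 → i < j) {A : Set ι} (hA : IsAncestral B A) {i k : ι} (hi : i ∈ A)
    (hk : k ∉ A) : (1 - B)⁻¹ k i = 0 := by
  induction i using WellFoundedLT.induction with
  | _ i IH =>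
    have hki : k ≠ i := fun h => hk (h ▸ hi)
    rw [inv_one_sub_eq_one_add_mul hB, Matrix.add_apply, one_apply_ne hki, zero_add, mul_apply]
    refine Finset.sum_eq_zero fun l _ => ?_
    by_cases hl : B l i = 0
    · rw [hl, mul_zero]
    · rw [IH l (hB l i hl) (hA i hi l hl), zero_mul]

theorem inv_one_sub_apply_self (hB : ∀ i j, B i j ≠ 0 → i < j) (i : ι) :
    (1 - B)⁻¹ i i = 1 := by
  rw [inv_one_sub_eq_one_add_mul hB, Matrix.add_apply, one_apply_eq, mul_apply, add_eq_left]
  refine Finset.sum_eq_zero fun l _ => ?_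
  by_cases hl : B l i = 0
  · rw [hl, mul_zero]
  · rw [inv_one_sub_apply_eq_zero_of_isAncestral hB (isAncestral_Iio hB i) (hB l i hl)
      (lt_irrefl i), zero_mul]

end Triangular

variable {p : ℕ}

theorem modelCov_const (B : Matrix (Fin p) (Fin p) ℝ) (ω : ℝ) :
    modelCov B (fun _ => ω) = ω • ((1 - B)⁻¹ᵀ * (1 - B)⁻¹) := by
  rw [modelCov, transpose_nonsing_inv, transpose_sub, transpose_one, ← smul_one_eq_diagonal,
    mul_smul_comm, smul_mul_assoc, mul_one]

theorem dotProduct_modelCov_mulVec (B : Matrix (Fin p) (Fin p) ℝ) (ω : ℝ) (v : Fin p → ℝ) :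
    v ⬝ᵥ modelCov B (fun _ => ω) *ᵥ v = ω * ((1 - B)⁻¹ *ᵥ v ⬝ᵥ (1 - B)⁻¹ *ᵥ v) := by
  rw [modelCov_const, smul_mulVec, dotProduct_smul, smul_eq_mul, ← mulVec_mulVec,
    dotProduct_mulVec, vecMul_transpose]

theorem posDef_modelCov {B : Matrix (Fin p) (Fin p) ℝ} (hB : IsUnit (1 - B).det) {ω : ℝ}
    (hω : 0 < ω) : (modelCov B fun _ => ω).PosDef := by
  rw [modelCov_const, ← conjTranspose_eq_transpose_of_trivial]
  refine (PosDef.conjTranspose_mul_self _ ?_).smul hω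
  exact mulVec_injective_iff_isUnit.mpr
    ((isUnit_iff_isUnit_det _).mpr (isUnit_nonsing_inv_det _ hB))

theorem det_modelCov {B : Matrix (Fin p) (Fin p) ℝ} (hB : ∀ i j, B i j ≠ 0 → i < j) (ω : ℝ) :
    (modelCov B fun _ => ω).det = ω ^ p := by
  rw [modelCov_const, det_smul, det_mul, det_transpose, det_nonsing_inv, det_one_sub_eq_one hB,
    Ring.inverse_one, mul_one, mul_one, Fintype.card_fin]

theorem mem_PRED {σ : Equiv.Perm (Fin p)} {i j : Fin p} :
    i ∈ PRED σ j ↔ σ.symm i < σ.symm j := by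
  simp [PRED]

theorem self_notMem_PRED (σ : Equiv.Perm (Fin p)) (j : Fin p) : j ∉ PRED σ j := by
  simp [PRED]

/-- The coefficient vectors `v` of the combinations `v ⬝ᵥ X = X_j - β ⬝ᵥ X_A`. -/
def residualCoeffs (j : Fin p) (A : Finset (Fin p)) : Set (Fin p → ℝ) :=
  {v | v j = 1 ∧ ∀ i ∉ insert j A, v i = 0}

noncomputable def regressionCoeff (S : Matrix (Fin p) (Fin p) ℝ) (j : Fin p)
    (A : Finset (Fin p)) : A → ℝ :=
  (S.submatrix (Subtype.val : A → Fin p) (Subtype.val : A → Fin p))⁻¹ *ᵥ fun a : A => S a j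

noncomputable def regressionResidual (S : Matrix (Fin p) (Fin p) ℝ) (j : Fin p)
    (A : Finset (Fin p)) : Fin p → ℝ :=
  Pi.single j 1 - ∑ a : A, regressionCoeff S j A a • Pi.single (a : Fin p) 1

section Residual

variable {S : Matrix (Fin p) (Fin p) ℝ} {j : Fin p} {A : Finset (Fin p)}

theorem regressionResidual_apply_of_notMem {i : Fin p} (hi : i ∉ A) :
    regressionResidual S j A i = (Pi.single j 1 : Fin p → ℝ) i := by
  rw [regressionResidual, Pi.sub_apply, Finset.sum_apply, sub_eq_self]
  refine Finset.sum_eq_zero fun a _ => ?_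
  have hai : i ≠ a := fun h => hi (h ▸ a.2)
  rw [Pi.smul_apply, Pi.single_eq_of_ne hai, smul_zero]

theorem regressionResidual_mem (hj : j ∉ A) :
    regressionResidual S j A ∈ residualCoeffs j A := by
  refine ⟨by simp [regressionResidual_apply_of_notMem hj], fun i hi => ?_⟩
  rw [Finset.mem_insert, not_or] at hi
  rw [regressionResidual_apply_of_notMem hi.2, Pi.single_eq_of_ne hi.1]

theorem mulVec_regressionResidual_apply (i : Fin p) :
    (S *ᵥ regressionResidual S j A) i = S i j - ∑ a : A, S i a * regressionCoeff S j A a := by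
  simp [regressionResidual, mulVec_sub, mulVec_sum, mulVec_smul, mul_comm]

theorem mulVec_regressionResidual_apply_self :
    (S *ᵥ regressionResidual S j A) j = condVar S j A := by
  rw [mulVec_regressionResidual_apply, condVar]
  simp only [regressionCoeff, mulVec, dotProduct, Finset.mul_sum, mul_assoc]
  rfl

theorem mulVec_regressionResidual_apply_of_mem (hS : S.PosDef) {i : Fin p} (hi : i ∈ A) :
    (S *ᵥ regressionResidual S j A) i = 0 := by
  set W := S.submatrix (Subtype.val : A → Fin p) (Subtype.val : A → Fin p)
  have hW : IsUnit W.det := (hS.submatrix Subtype.val_injective).det_pos.ne'.isUnit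
  have hsolve : (W *ᵥ regressionCoeff S j A) ⟨i, hi⟩ = S i j := by
    rw [regressionCoeff, mulVec_mulVec, mul_nonsing_inv _ hW, one_mulVec]
  rw [mulVec_regressionResidual_apply]
  exact sub_eq_zero.mpr hsolve.symm

theorem dotProduct_mulVec_regressionResidual (hS : S.PosDef) {v : Fin p → ℝ}
    (hv : ∀ i ∉ insert j A, v i = 0) :
    v ⬝ᵥ S *ᵥ regressionResidual S j A = v j * condVar S j A := by
  rw [dotProduct, Finset.sum_eq_single j, mulVec_regressionResidual_apply_self]
  · intro i _ hij
    by_cases hi : i ∈ A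
    · rw [mulVec_regressionResidual_apply_of_mem hS hi, mul_zero]
    · rw [hv i (by simp [hij, hi]), zero_mul]
  · simp

theorem isLeast_condVar (hS : S.PosDef) (hj : j ∉ A) :
    IsLeast ((fun v => v ⬝ᵥ S *ᵥ v) '' residualCoeffs j A) (condVar S j A) := by
  set r := regressionResidual S j A
  have hr := regressionResidual_mem (S := S) hj
  refine ⟨⟨r, hr, (dotProduct_mulVec_regressionResidual hS hr.2).trans (by rw [hr.1, one_mul])⟩,
    ?_⟩
  rintro _ ⟨v, hv, rfl⟩
  have hd := hS.posSemidef.dotProduct_mulVec_nonneg (v - r)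
  have hvr := dotProduct_mulVec_regressionResidual hS hv.2
  have hrr := dotProduct_mulVec_regressionResidual hS hr.2
  rw [star_trivial, sub_dotProduct, mulVec_sub, dotProduct_sub, dotProduct_sub,
    dotProduct_mulVec_comm (by simpa using hS.isHermitian) r v, hvr, hrr, hv.1, hr.1] at hd
  dsimp only
  linarith

theorem condVar_pos (hS : S.PosDef) (hj : j ∉ A) : 0 < condVar S j A := by
  obtain ⟨v, hv, hvS⟩ := (isLeast_condVar hS hj).1
  have hv0 : v ≠ 0 := fun h => by simpa [h] using hv.1
  simpa [← hvS] using hS.dotProduct_mulVec_pos hv0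

theorem det_eq_prod_condVar (hS : S.PosDef) (σ : Equiv.Perm (Fin p)) :
    S.det = ∏ j, condVar S j (PRED σ j) := by
  set C : Matrix (Fin p) (Fin p) ℝ := of fun i k => regressionResidual S k (PRED σ k) i
  have hC : ∀ k, regressionResidual S k (PRED σ k) ∈ residualCoeffs k (PRED σ k) :=
    fun k => regressionResidual_mem (self_notMem_PRED σ k)
  have hCdet : C.det = 1 := by
    rw [← det_submatrix_equiv_self σ, det_of_isUpperTriangular]
    · exact Finset.prod_eq_one fun a _ => (hC (σ a)).1
    · intro a b (hba : b < a)
      apply (hC (σ b)).2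
      simp [mem_PRED, hba.ne', hba.le]
  have hSCdet : (S * C).det = ∏ j, condVar S j (PRED σ j) := by
    rw [← det_submatrix_equiv_self σ, det_of_isLowerTriangular,
      ← Equiv.prod_comp σ fun j => condVar S j (PRED σ j)]
    · exact Finset.prod_congr rfl fun a _ => mulVec_regressionResidual_apply_self
    · intro a b hab
      exact mulVec_regressionResidual_apply_of_mem hS (by simpa [mem_PRED] using hab)
  rw [← hSCdet, det_mul, hCdet, mul_one]

end Residual

variable {B : Matrix (Fin p) (Fin p) ℝ} {ω : ℝ}

theorem inv_one_sub_mulVec_apply_self (hB : ∀ i j, B i j ≠ 0 → i < j) {A : Finset (Fin p)}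
    (hA : IsAncestral B A) {j : Fin p} (hj : j ∉ A) {v : Fin p → ℝ}
    (hv : v ∈ residualCoeffs j A) : ((1 - B)⁻¹ *ᵥ v) j = 1 := by
  rw [mulVec, dotProduct, Finset.sum_eq_single j, inv_one_sub_apply_self hB, hv.1, one_mul]
  · intro i _ hij
    by_cases hi : i ∈ A
    · rw [inv_one_sub_apply_eq_zero_of_isAncestral hB hA hi hj, zero_mul]
    · rw [hv.2 i (by simp [hij, hi]), mul_zero]
  · simp

theorem condVar_modelCov_eq_iff (hB : ∀ i j, B i j ≠ 0 → i < j) (hω : 0 < ω)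
    {A : Finset (Fin p)} (hA : IsAncestral B A) {j : Fin p} (hj : j ∉ A) :
    condVar (modelCov B fun _ => ω) j A = ω ↔ ∀ k, B k j ≠ 0 → k ∈ A := by
  obtain ⟨⟨r, hr, hrS⟩, hleast⟩ :=
    isLeast_condVar (posDef_modelCov (isUnit_det_one_sub hB) hω) hj
  have hNr := inv_one_sub_mulVec_apply_self hB hA hj hr
  simp only [dotProduct_modelCov_mulVec] at hrS
  have hge : ω ≤ condVar (modelCov B fun _ => ω) j A := by
    rw [← hrS]
    exact le_mul_of_one_le_right hω.le (one_le_dotProduct_self hNr)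
  have hBjj : B j j = 0 := by_contra fun h => (hB j j h).false
  constructor
  · intro h k hk
    have hkj : k ≠ j := fun hkj => hk (hkj ▸ hBjj)
    rw [← hrS, mul_eq_left₀ hω.ne', dotProduct_self_eq_one_iff hNr] at h
    have hr_eq : r = (1 - B) *ᵥ Pi.single j 1 := by
      rw [← h, mulVec_mulVec, mul_nonsing_inv _ (isUnit_det_one_sub hB), one_mulVec]
    by_contra hkA
    have := hr.2 k (by simp [hkj, hkA])
    simp [hr_eq, hkj, hk] at this
  · intro hpa
    refine le_antisymm ?_ hge
    have hv : (1 - B) *ᵥ Pi.single j 1 ∈ residualCoeffs j A := by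
      refine ⟨by simp [hBjj], fun k hk => ?_⟩
      rw [Finset.mem_insert, not_or] at hk
      simpa [hk.1] using fun h => hk.2 (hpa k h)
    calc condVar (modelCov B fun _ => ω) j A
        ≤ (1 - B) *ᵥ Pi.single j 1 ⬝ᵥ (modelCov B fun _ => ω) *ᵥ ((1 - B) *ᵥ Pi.single j 1) :=
          hleast ⟨_, hv, rfl⟩
      _ = ω := by
          rw [dotProduct_modelCov_mulVec, mulVec_mulVec, nonsing_inv_mul _ (isUnit_det_one_sub hB),
            one_mulVec]
          simp

theorem isAncestral_PRED {σ : Equiv.Perm (Fin p)} {j : Fin p}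
    (h : ∀ i ∈ PRED σ j, ∀ k, B k i ≠ 0 → σ.symm k < σ.symm i) : IsAncestral B (PRED σ j) :=
  fun i hi k hk => mem_PRED.2 ((h i hi k hk).trans (mem_PRED.1 hi))

theorem forall_condVar_modelCov_eq_iff (hB : ∀ i j, B i j ≠ 0 → i < j) (hω : 0 < ω)
    (σ : Equiv.Perm (Fin p)) :
    (∀ j, condVar (modelCov B fun _ => ω) j (PRED σ j) = ω) ↔ Consistent B σ := by
  refine ⟨fun hall k j => ?_, fun hcons j => ?_⟩
  · induction j using (InvImage.wf σ.symm wellFounded_lt).induction generalizing k with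
    | _ j IH =>
      have hA := isAncestral_PRED fun i hi => IH i (mem_PRED.1 hi)
      exact fun hk => mem_PRED.1
        ((condVar_modelCov_eq_iff hB hω hA (self_notMem_PRED σ j)).1 (hall j) k hk)
  · have hA : IsAncestral B (PRED σ j) := isAncestral_PRED fun i _ k hk => hcons k i hk
    exact (condVar_modelCov_eq_iff hB hω hA (self_notMem_PRED σ j)).2
      fun k hk => mem_PRED.2 (hcons k j hk)

end GaussianSEM

open GaussianSEM

/-- If all error variances in the Gaussian linear SEM are equal (`Ω* = ω* I`), then for
every permutation `σ`, `tr(Ω*_σ) = ∑_j Var(X_j | X_{PRED_j(σ)}) ≥ tr(Ω*) = p ω*`, with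
equality if and only if `σ` is consistent with the true DAG `G*`; consequently the true
DAG is the unique minimum-trace DAG. -/
theorem stmt19 {p : ℕ} (B : Matrix (Fin p) (Fin p) ℝ) (ωs : ℝ) (hωs : 0 < ωs)
    (hB : ∀ i j, B i j ≠ 0 → i < j)
    (σ : Equiv.Perm (Fin p)) :
    (p : ℝ) * ωs ≤ ∑ j, condVar (modelCov B (fun _ => ωs)) j (PRED σ j) ∧
      (∑ j, condVar (modelCov B (fun _ => ωs)) j (PRED σ j) = (p : ℝ) * ωs ↔
        Consistent B σ) := by
  have hS := posDef_modelCov (isUnit_det_one_sub hB) hωs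
  have hprod :
      ∏ j, condVar (modelCov B fun _ => ωs) j (PRED σ j) = ωs ^ Fintype.card (Fin p) := by
    rw [← det_eq_prod_condVar hS σ, det_modelCov hB, Fintype.card_fin]
  obtain ⟨hle, heq⟩ :=
    card_mul_le_sum_and_sum_eq_iff hωs (fun j => condVar_pos hS (self_notMem_PRED σ j)) hprod
  rw [Fintype.card_fin] at hle heq
  exact ⟨hle, heq.trans (forall_condVar_modelCov_eq_iff hB hωs σ)⟩
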